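/- arXiv:2201.12980 — 6 statements merged into one kernel-verified Lean document; each statement's English description precedes it below -/
import Mathlib

section
/- Let τ, c, μ, β, k, C₁, v∞ > 0 with d := 2β/μ > 1. Define v(ζ) = [ (1/2)·C₁·k·c⁻²·τ⁻¹·μ·(d−1)·e^{−2τcζ/μ} + v∞^{1−d} ]^{−1/(d−1)} and u(ζ) = C₁·v(ζ)^d·e^{−2τcζ/μ}. Then u satisfies the ODE τ·c·u′ − β·(u·v′/v)′ + (μ/2)·u″ = 0 on ℝ. -/
open Real


lemma aux_deriv (A B a q K m : ℝ) (hA : 0 < A) (hB : 0 < B) (x : ℝ) :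
    HasDerivAt (fun ζ => K * (A * Real.exp (-(a * ζ)) + B) ^ q * Real.exp (-(m * ζ)))
      (K * (q * (A * Real.exp (-(a * x)) + B) ^ (q - 1) * (A * (-a * Real.exp (-(a * x))))) * Real.exp (-(m * x))
        + K * ((A * Real.exp (-(a * x)) + B) ^ q) * (-m * Real.exp (-(m * x)))) x := by
  have h1 : HasDerivAt (fun y : ℝ => -(a * y)) (-a) x := by
    simpa using ((hasDerivAt_id x).const_mul a).fun_neg
  have h2 : HasDerivAt (fun y : ℝ => -(m * y)) (-m) x := by
    simpa using ((hasDerivAt_id x).const_mul m).fun_neg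
  have hw : HasDerivAt (fun ζ => A * Real.exp (-(a * ζ)) + B)
      (A * (-a * Real.exp (-(a * x)))) x := by
    have := (h1.exp.const_mul A).add_const B
    exact this.congr_deriv (by ring)
  have hpos : (0:ℝ) < A * Real.exp (-(a * x)) + B := by positivity
  have hq := hw.rpow_const (p := q) (Or.inl hpos.ne')
  have := (hq.const_mul K).mul h2.exp
  exact this.congr_deriv (by ring)

lemma key_lemma (a A B C₁ μ d : ℝ) (ha : 0 < a) (hA : 0 < A) (hB : 0 < B)
    (hμ : 0 < μ) (hC₁ : 0 < C₁) (hdne : d - 1 ≠ 0)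
    (u v : ℝ → ℝ)
    (hv : ∀ x, v x = (A * Real.exp (-(a * x)) + B) ^ (-(1 / (d - 1))))
    (hu : ∀ x, u x = C₁ * v x ^ d * Real.exp (-(a * x))) :
    ∀ ζ : ℝ,
      (a * μ / 2) * deriv u ζ
        - (d * μ / 2) * deriv (fun z => u z * deriv v z / v z) ζ
        + (μ / 2) * deriv (deriv u) ζ = 0 := by
  set p : ℝ := -(1 / (d - 1)) with hp
  have hw0 : ∀ x : ℝ, (0:ℝ) < A * Real.exp (-(a * x)) + B := fun x => by positivity
  -- rewrite u in rpow form
  have hu2 : u = fun x => C₁ * (A * Real.exp (-(a * x)) + B) ^ (p * d) * Real.exp (-(a * x)) := by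
    funext x
    rw [hu, hv, Real.rpow_mul (hw0 x).le]
  have hv2 : v = fun x => 1 * (A * Real.exp (-(a * x)) + B) ^ p * Real.exp (-(0 * x)) := by
    funext x
    rw [hv]
    simp
  -- derivative of v
  have hderivv : ∀ x : ℝ, deriv v x =
      (p * (-a * A)) * (A * Real.exp (-(a * x)) + B) ^ (p - 1) * Real.exp (-(a * x)) := by
    intro x
    rw [hv2, (aux_deriv A B a p 1 0 hA hB x).deriv]
    simp
    ring
  -- the chemotaxis term as explicit function
  have hG : (fun z => u z * deriv v z / v z)
      = fun z => (C₁ * p * (-a * A)) * (A * Real.exp (-(a * z)) + B) ^ (p * d - 1)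
          * Real.exp (-(2 * a * z)) := by
    funext z
    rw [hu2, hderivv z, hv]
    have hpow : (A * Real.exp (-(a * z)) + B) ^ (p * d) * (A * Real.exp (-(a * z)) + B) ^ (p - 1)
        / (A * Real.exp (-(a * z)) + B) ^ p
        = (A * Real.exp (-(a * z)) + B) ^ (p * d - 1) := by
      rw [← Real.rpow_add (hw0 z), ← Real.rpow_sub (hw0 z)]
      congr 1
      ring
    have hexp2 : Real.exp (-(2 * a * z)) = Real.exp (-(a * z)) * Real.exp (-(a * z)) := by
      rw [← Real.exp_add]; congr 1; ring
    rw [hexp2]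
    linear_combination (C₁ * p * (-a * A) * (Real.exp (-(a * z)) * Real.exp (-(a * z)))) * hpow
  -- deriv u as explicit function
  have hderivu : deriv u = fun x =>
      (C₁ * (p * d) * (-a * A)) * (A * Real.exp (-(a * x)) + B) ^ (p * d - 1) * Real.exp (-(2 * a * x))
        + (-a * C₁) * (A * Real.exp (-(a * x)) + B) ^ (p * d) * Real.exp (-(a * x)) := by
    funext x
    rw [hu2, (aux_deriv A B a (p * d) C₁ a hA hB x).deriv]
    rw [show (-(2 * a * x)) = -(a * x) + -(a * x) by ring, Real.exp_add]
    ring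
  intro ζ
  -- second derivative of u
  have hUU : HasDerivAt (deriv u)
      ((C₁ * (p * d) * (-a * A)) * ((p * d - 1) * (A * Real.exp (-(a * ζ)) + B) ^ (p * d - 1 - 1) * (A * (-a * Real.exp (-(a * ζ))))) * Real.exp (-(2 * a * ζ))
        + (C₁ * (p * d) * (-a * A)) * ((A * Real.exp (-(a * ζ)) + B) ^ (p * d - 1)) * (-(2 * a) * Real.exp (-(2 * a * ζ)))
        + ((-a * C₁) * ((p * d) * (A * Real.exp (-(a * ζ)) + B) ^ (p * d - 1) * (A * (-a * Real.exp (-(a * ζ))))) * Real.exp (-(a * ζ))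
          + (-a * C₁) * ((A * Real.exp (-(a * ζ)) + B) ^ (p * d)) * (-a * Real.exp (-(a * ζ))))) ζ := by
    rw [hderivu]
    exact (aux_deriv A B a (p * d - 1) (C₁ * (p * d) * (-a * A)) (2 * a) hA hB ζ).add
      (aux_deriv A B a (p * d) (-a * C₁) a hA hB ζ)
  have hGG : HasDerivAt (fun z => u z * deriv v z / v z)
      ((C₁ * p * (-a * A)) * ((p * d - 1) * (A * Real.exp (-(a * ζ)) + B) ^ (p * d - 1 - 1) * (A * (-a * Real.exp (-(a * ζ))))) * Real.exp (-(2 * a * ζ))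
        + (C₁ * p * (-a * A)) * ((A * Real.exp (-(a * ζ)) + B) ^ (p * d - 1)) * (-(2 * a) * Real.exp (-(2 * a * ζ)))) ζ := by
    rw [hG]
    exact aux_deriv A B a (p * d - 1) (C₁ * p * (-a * A)) (2 * a) hA hB ζ
  rw [hUU.deriv, hGG.deriv, hderivu]
  simp only []
  -- now pure algebra
  set E : ℝ := Real.exp (-(a * ζ)) with hE
  have hEpos : 0 < E := Real.exp_pos _
  set W : ℝ := A * E + B with hW
  have hWpos : 0 < W := hw0 ζ
  have hE2 : Real.exp (-(2 * a * ζ)) = E * E := by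
    rw [hE, ← Real.exp_add]; congr 1; ring
  have e1 : W ^ (p * d - 1) = W ^ (p * d - 1 - 1) * W := by
    rw [← Real.rpow_add_one hWpos.ne']; congr 1; ring
  have e2 : W ^ (p * d) = W ^ (p * d - 1 - 1) * W * W := by
    rw [← Real.rpow_add_one hWpos.ne', ← Real.rpow_add_one hWpos.ne']; congr 1; ring
  rw [hE2, e1, e2, hW, hp]
  field_simp
  ring


theorem stmt0 (τ c μ β k C₁ vinf : ℝ)
    (hτ : 0 < τ) (hc : 0 < c) (hμ : 0 < μ) (hβ : 0 < β) (hk : 0 < k)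
    (hC₁ : 0 < C₁) (hvinf : 0 < vinf)
    (d : ℝ) (hd : d = 2 * β / μ) (hd1 : 1 < d)
    (v u : ℝ → ℝ)
    (hv : ∀ ζ, v ζ =
      ((1/2) * C₁ * k * c⁻¹ * c⁻¹ * τ⁻¹ * μ * (d - 1) * Real.exp (-(2 * τ * c * ζ) / μ)
        + vinf ^ (1 - d)) ^ (-(1 / (d - 1))))
    (hu : ∀ ζ, u ζ = C₁ * v ζ ^ d * Real.exp (-(2 * τ * c * ζ) / μ)) :
    ∀ ζ : ℝ,
      τ * c * deriv u ζ
        - β * deriv (fun z => u z * deriv v z / v z) ζ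
        + (μ / 2) * deriv (deriv u) ζ = 0 := by
  have hd1' : (0:ℝ) < d - 1 := by linarith
  have hexp : ∀ x : ℝ, -(2 * τ * c * x) / μ = -(2 * τ * c / μ * x) := by
    intro x; ring
  have hA : 0 < (1/2) * C₁ * k * c⁻¹ * c⁻¹ * τ⁻¹ * μ * (d - 1) := by positivity
  have hB : 0 < vinf ^ (1 - d) := Real.rpow_pos_of_pos hvinf _
  have ha : 0 < 2 * τ * c / μ := by positivity
  have hv' : ∀ x, v x = ((1/2) * C₁ * k * c⁻¹ * c⁻¹ * τ⁻¹ * μ * (d - 1)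
      * Real.exp (-(2 * τ * c / μ * x)) + vinf ^ (1 - d)) ^ (-(1 / (d - 1))) := by
    intro x; rw [hv, hexp]
  have hu' : ∀ x, u x = C₁ * v x ^ d * Real.exp (-(2 * τ * c / μ * x)) := by
    intro x; rw [hu, hexp]
  have h := key_lemma (2 * τ * c / μ) ((1/2) * C₁ * k * c⁻¹ * c⁻¹ * τ⁻¹ * μ * (d - 1))
      (vinf ^ (1 - d)) C₁ μ d ha hA hB hμ hC₁ hd1'.ne' u v hv' hu'
  intro ζ
  have hτc : 2 * τ * c / μ * μ / 2 = τ * c := by field_simp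
  have hβ' : d * μ / 2 = β := by rw [hd]; field_simp
  have := h ζ
  rw [hτc, hβ'] at this
  exact this
end

section
/- With u and v as in the previous construction (τ, c, μ, β, k, C₁, v∞ > 0, d = 2β/μ > 1), the pair also satisfies c·v′ = k·u on ℝ. -/
open Real

theorem stmt1 (τ c μ β k C₁ vinf : ℝ)
    (hτ : 0 < τ) (hc : 0 < c) (hμ : 0 < μ) (hβ : 0 < β) (hk : 0 < k)
    (hC₁ : 0 < C₁) (hvinf : 0 < vinf)
    (d : ℝ) (hd : d = 2 * β / μ) (hd1 : 1 < d)
    (v u : ℝ → ℝ)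
    (hv : ∀ ζ, v ζ =
      ((1/2) * C₁ * k * c⁻¹ * c⁻¹ * τ⁻¹ * μ * (d - 1) * Real.exp (-(2 * τ * c * ζ) / μ)
        + vinf ^ (1 - d)) ^ (-(1 / (d - 1))))
    (hu : ∀ ζ, u ζ = C₁ * v ζ ^ d * Real.exp (-(2 * τ * c * ζ) / μ)) :
    ∀ ζ : ℝ, c * deriv v ζ = k * u ζ := by
  intro ζ
  set A : ℝ := (1/2) * C₁ * k * c⁻¹ * c⁻¹ * τ⁻¹ * μ * (d - 1) with hA
  set B : ℝ := vinf ^ (1 - d) with hB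
  set p : ℝ := -(1 / (d - 1)) with hp
  have hd0 : (0:ℝ) < d - 1 := by linarith
  have hA0 : 0 < A := by
    apply mul_pos _ hd0
    positivity
  have hB0 : 0 < B := Real.rpow_pos_of_pos hvinf _
  set g : ℝ → ℝ := fun ζ => A * Real.exp (-(2 * τ * c * ζ) / μ) + B with hg
  have hg0 : ∀ x, 0 < g x := fun x => by
    have := Real.exp_pos (-(2 * τ * c * x) / μ)
    simp only [hg]
    positivity
  have hgd : HasDerivAt g (A * (Real.exp (-(2 * τ * c * ζ) / μ) * (-(2 * τ * c) / μ))) ζ := by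
    have h1 : HasDerivAt (fun x : ℝ => -(2 * τ * c * x) / μ) (-(2 * τ * c) / μ) ζ := by
      simpa using ((hasDerivAt_id ζ).const_mul (2 * τ * c)).neg.div_const μ
    exact ((h1.exp).const_mul A).add_const B
  have hvfun : v = fun x => g x ^ p := funext fun x => hv x
  have hvd : HasDerivAt v (A * (Real.exp (-(2 * τ * c * ζ) / μ) * (-(2 * τ * c) / μ)) * p *
      g ζ ^ (p - 1)) ζ := by
    rw [hvfun]
    exact hgd.rpow_const (Or.inl (hg0 ζ).ne')
  rw [hvd.deriv, hu ζ, hv ζ]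
  have hpd : p * d = p - 1 := by
    rw [hp]
    field_simp
    ring
  have hvexp : ((g ζ) ^ p) ^ d = g ζ ^ (p - 1) := by
    rw [← Real.rpow_mul (hg0 ζ).le, hpd]
  rw [hvexp]
  have hc0 : c ≠ 0 := hc.ne'
  have hτ0 : τ ≠ 0 := hτ.ne'
  have hμ0 : μ ≠ 0 := hμ.ne'
  rw [hA, hp]
  field_simp
end

section
/- Let τ, c, μ, β, γ, k > 0 with β + γτ > 0, and let C₅ > 0. Define u(ζ) = (2τc²/(k(β+γτ)))·(1 + C₅e^{2τcζ/μ})⁻¹ and v(ζ) = v∞(1 + C₅⁻¹e^{−2τcζ/μ})^{−μ/(β+γτ)}. Then the pair (u, v) satisfies c·v′ = k·u·v on ℝ. -/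
open Real

theorem stmt9 (τ c μ β γ k C₅ vinf : ℝ)
    (hτ : 0 < τ) (hc : 0 < c) (hμ : 0 < μ) (hβ : 0 < β) (hγ : 0 < γ)
    (hk : 0 < k) (hβγ : 0 < β + γ * τ) (hC₅ : 0 < C₅) (hvinf : 0 < vinf)
    (u v : ℝ → ℝ)
    (hu : ∀ ζ, u ζ = (2 * τ * c ^ 2 / (k * (β + γ * τ))) *
        (1 + C₅ * Real.exp (2 * τ * c * ζ / μ))⁻¹)
    (hv : ∀ ζ, v ζ = vinf *
        (1 + C₅⁻¹ * Real.exp (-(2 * τ * c * ζ) / μ)) ^ (-(μ / (β + γ * τ)))) :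
    ∀ ζ : ℝ, c * deriv v ζ = k * u ζ * v ζ := by
  have hvfun : v = fun ζ => vinf *
      (1 + C₅⁻¹ * Real.exp (-(2 * τ * c * ζ) / μ)) ^ (-(μ / (β + γ * τ))) := funext hv
  intro ζ
  set p : ℝ := -(μ / (β + γ * τ)) with hp
  set m : ℝ := -(2 * τ * c) / μ with hm
  have hmζ : ∀ x : ℝ, -(2 * τ * c * x) / μ = m * x := by intro x; rw [hm]; ring
  have hEpos : 0 < Real.exp (m * ζ) := Real.exp_pos _
  have hfpos : 0 < 1 + C₅⁻¹ * Real.exp (m * ζ) := by positivity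
  have h1 : HasDerivAt (fun x : ℝ => m * x) m ζ := by
    simpa using (hasDerivAt_id ζ).const_mul m
  have h2 : HasDerivAt (fun x : ℝ => 1 + C₅⁻¹ * Real.exp (m * x))
      (C₅⁻¹ * (Real.exp (m * ζ) * m)) ζ := ((h1.exp).const_mul C₅⁻¹).const_add 1
  have h3 : HasDerivAt (fun x : ℝ => vinf * (1 + C₅⁻¹ * Real.exp (m * x)) ^ p)
      (vinf * (C₅⁻¹ * (Real.exp (m * ζ) * m) * p *
        (1 + C₅⁻¹ * Real.exp (m * ζ)) ^ (p - 1))) ζ :=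
    (h2.rpow_const (Or.inl hfpos.ne')).const_mul vinf
  have hd : deriv v ζ = vinf * (C₅⁻¹ * (Real.exp (m * ζ) * m) * p *
      (1 + C₅⁻¹ * Real.exp (m * ζ)) ^ (p - 1)) := by
    rw [hvfun]
    have heq : (fun x => vinf * (1 + C₅⁻¹ * Real.exp (-(2 * τ * c * x) / μ)) ^ p)
        = fun x => vinf * (1 + C₅⁻¹ * Real.exp (m * x)) ^ p := by
      funext x; rw [hmζ x]
    rw [heq]
    exact h3.deriv
  have hE : Real.exp (2 * τ * c * ζ / μ) = (Real.exp (m * ζ))⁻¹ := by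
    rw [← Real.exp_neg]; congr 1; rw [hm]; field_simp
  have hsub : (1 + C₅⁻¹ * Real.exp (m * ζ)) ^ (p - 1)
      = (1 + C₅⁻¹ * Real.exp (m * ζ)) ^ p / (1 + C₅⁻¹ * Real.exp (m * ζ)) := by
    rw [Real.rpow_sub hfpos, Real.rpow_one]
  rw [hd, hu ζ, hv ζ, hmζ ζ, hE, hsub, hp, hm]
  have h1pos : 0 < 1 + C₅ * (Real.exp (m * ζ))⁻¹ := by positivity
  rw [hm] at hfpos h1pos hEpos
  field_simp
  ring
end

section
/- With u, v as above (τ, c, μ, β, γ, k, C₅, v∞ > 0), the pair satisfies the organism equation τc·u′ − β·(ln v)′·u′ + (μ/2)·u″ − τγ·u·(ln v)″ = 0 on ℝ. -/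
open Real

theorem stmt10 (τ c μ β γ k C₅ vinf : ℝ)
    (hτ : 0 < τ) (hc : 0 < c) (hμ : 0 < μ) (hβ : 0 < β) (hγ : 0 < γ)
    (hk : 0 < k) (hβγ : 0 < β + γ * τ) (hC₅ : 0 < C₅) (hvinf : 0 < vinf)
    (u v : ℝ → ℝ)
    (hu : ∀ ζ, u ζ = (2 * τ * c ^ 2 / (k * (β + γ * τ))) *
        (1 + C₅ * Real.exp (2 * τ * c * ζ / μ))⁻¹)
    (hv : ∀ ζ, v ζ = vinf *
        (1 + C₅⁻¹ * Real.exp (-(2 * τ * c * ζ) / μ)) ^ (-(μ / (β + γ * τ)))) :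
    ∀ ζ : ℝ,
      τ * c * deriv u ζ
        - β * deriv (fun z => Real.log (v z)) ζ * deriv u ζ
        + (μ / 2) * deriv (deriv u) ζ
        - τ * γ * u ζ * deriv (deriv (fun z => Real.log (v z))) ζ = 0 := by
  have hμ0 : μ ≠ 0 := hμ.ne'
  have hβγ0 : β + γ * τ ≠ 0 := hβγ.ne'
  have hk0 : k ≠ 0 := hk.ne'
  have hC0 : C₅ ≠ 0 := hC₅.ne'
  set a := 2 * τ * c / μ with ha
  set A := 2 * τ * c ^ 2 / (k * (β + γ * τ)) with hA
  set m := μ / (β + γ * τ) with hm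
  have harg : ∀ ζ : ℝ, 2 * τ * c * ζ / μ = a * ζ := by
    intro ζ; rw [ha]; field_simp
  have hwpos : ∀ ζ : ℝ, (0:ℝ) < 1 + C₅ * Real.exp (a * ζ) := by
    intro ζ; positivity
  have hw0 : ∀ ζ : ℝ, (1 + C₅ * Real.exp (a * ζ)) ≠ 0 := fun ζ => (hwpos ζ).ne'
  -- u as explicit function
  have hu' : u = fun z => A * (1 + C₅ * Real.exp (a * z))⁻¹ := by
    funext z; rw [hu z, harg z]
  -- log v as explicit function
  have hL : (fun z => Real.log (v z)) =
      fun z => Real.log vinf - m * (Real.log (1 + C₅ * Real.exp (a * z))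
        - Real.log C₅ - a * z) := by
    funext z
    have hbase : 1 + C₅⁻¹ * Real.exp (-(2 * τ * c * z) / μ)
        = (1 + C₅ * Real.exp (a * z)) / (C₅ * Real.exp (a * z)) := by
      have h1 : -(2 * τ * c * z) / μ = -(a * z) := by rw [ha]; field_simp
      rw [h1, Real.exp_neg]
      field_simp
      ring
    have hbpos : (0:ℝ) < 1 + C₅⁻¹ * Real.exp (-(2 * τ * c * z) / μ) := by positivity
    rw [hv z, Real.log_mul hvinf.ne' (Real.rpow_pos_of_pos hbpos _).ne',
      Real.log_rpow hbpos, hbase,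
      Real.log_div (hw0 z) (by positivity),
      Real.log_mul hC0 (Real.exp_ne_zero _), Real.log_exp]
    ring
  -- basic derivative facts
  have hE : ∀ ζ : ℝ, HasDerivAt (fun z => Real.exp (a * z)) (a * Real.exp (a * ζ)) ζ := by
    intro ζ
    have h1 : HasDerivAt (fun z : ℝ => a * z) a ζ := by
      simpa using (hasDerivAt_id ζ).const_mul a
    simpa [mul_comm] using h1.exp
  have hW : ∀ ζ : ℝ, HasDerivAt (fun z => 1 + C₅ * Real.exp (a * z))
      (C₅ * (a * Real.exp (a * ζ))) ζ := by
    intro ζ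
    exact ((hE ζ).const_mul C₅).const_add 1
  -- first derivative of u
  have hu1 : ∀ ζ : ℝ, HasDerivAt u
      (A * (-(C₅ * (a * Real.exp (a * ζ))) / (1 + C₅ * Real.exp (a * ζ)) ^ 2)) ζ := by
    intro ζ
    rw [hu']
    exact ((hW ζ).inv (hw0 ζ)).const_mul A
  have hdu : deriv u = fun ζ =>
      A * (-(C₅ * (a * Real.exp (a * ζ))) / (1 + C₅ * Real.exp (a * ζ)) ^ 2) := by
    funext ζ; exact (hu1 ζ).deriv
  -- second derivative of u
  have hu2 : ∀ ζ : ℝ, HasDerivAt (deriv u)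
      (A * ((-(C₅ * (a * (a * Real.exp (a * ζ)))) * (1 + C₅ * Real.exp (a * ζ)) ^ 2
        + C₅ * (a * Real.exp (a * ζ)) *
          (2 * (1 + C₅ * Real.exp (a * ζ)) * (C₅ * (a * Real.exp (a * ζ)))))
        / ((1 + C₅ * Real.exp (a * ζ)) ^ 2) ^ 2)) ζ := by
    intro ζ
    rw [hdu]
    have hneg : HasDerivAt (fun z => -(C₅ * (a * Real.exp (a * z))))
        (-(C₅ * (a * (a * Real.exp (a * ζ))))) ζ :=
      (((hE ζ).const_mul a).const_mul C₅).neg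
    have hden : HasDerivAt (fun z => (1 + C₅ * Real.exp (a * z)) ^ 2)
        ((2:ℕ) * (1 + C₅ * Real.exp (a * ζ)) ^ (2 - 1) * (C₅ * (a * Real.exp (a * ζ)))) ζ :=
      (hW ζ).pow 2
    have h := (hneg.div hden (pow_ne_zero 2 (hw0 ζ))).const_mul A
    refine h.congr_deriv ?_
    push_cast
    ring
  -- first derivative of log v
  have hL1 : ∀ ζ : ℝ, HasDerivAt (fun z => Real.log (v z))
      (-(m * (C₅ * (a * Real.exp (a * ζ)) / (1 + C₅ * Real.exp (a * ζ)) - a))) ζ := by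
    intro ζ
    rw [hL]
    have hlog : HasDerivAt (fun z => Real.log (1 + C₅ * Real.exp (a * z)))
        (C₅ * (a * Real.exp (a * ζ)) / (1 + C₅ * Real.exp (a * ζ))) ζ :=
      (hW ζ).log (hw0 ζ)
    have hid : HasDerivAt (fun z : ℝ => a * z) a ζ := by
      simpa using (hasDerivAt_id ζ).const_mul a
    have hin : HasDerivAt
        (fun z => Real.log (1 + C₅ * Real.exp (a * z)) - Real.log C₅ - a * z)
        (C₅ * (a * Real.exp (a * ζ)) / (1 + C₅ * Real.exp (a * ζ)) - a) ζ := by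
      exact ((hlog.sub_const (Real.log C₅)).sub hid)
    exact (hin.const_mul m).const_sub (Real.log vinf)
  have hdL : deriv (fun z => Real.log (v z)) = fun ζ =>
      -(m * (C₅ * (a * Real.exp (a * ζ)) / (1 + C₅ * Real.exp (a * ζ)) - a)) := by
    funext ζ; exact (hL1 ζ).deriv
  -- second derivative of log v
  have hL2 : ∀ ζ : ℝ, HasDerivAt (deriv (fun z => Real.log (v z)))
      (-(m * ((C₅ * (a * (a * Real.exp (a * ζ))) * (1 + C₅ * Real.exp (a * ζ))
        - C₅ * (a * Real.exp (a * ζ)) * (C₅ * (a * Real.exp (a * ζ))))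
        / (1 + C₅ * Real.exp (a * ζ)) ^ 2))) ζ := by
    intro ζ
    rw [hdL]
    have hnum : HasDerivAt (fun z => C₅ * (a * Real.exp (a * z)))
        (C₅ * (a * (a * Real.exp (a * ζ)))) ζ :=
      ((hE ζ).const_mul a).const_mul C₅
    have hq := hnum.div (hW ζ) (hw0 ζ)
    have hin : HasDerivAt
        (fun z => C₅ * (a * Real.exp (a * z)) / (1 + C₅ * Real.exp (a * z)) - a)
        ((C₅ * (a * (a * Real.exp (a * ζ))) * (1 + C₅ * Real.exp (a * ζ))
          - C₅ * (a * Real.exp (a * ζ)) * (C₅ * (a * Real.exp (a * ζ))))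
          / (1 + C₅ * Real.exp (a * ζ)) ^ 2) ζ := hq.sub_const a
    exact (hin.const_mul m).neg
  -- finish
  intro ζ
  rw [(hu2 ζ).deriv, (hL2 ζ).deriv, hdu, hdL, hu']
  simp only
  rw [ha, hA, hm]
  have hE0 := Real.exp_ne_zero (2 * τ * c / μ * ζ)
  have hw0' := hw0 ζ
  rw [ha] at hw0'
  field_simp
  ring
end

section
/- Let τ, c, μ, β, k > 0 and d = 2β/μ. Define u(ζ) = (2τc²/(kμ))·(d + e^{2τcζ/μ})⁻¹ and v(ζ) = v∞(d·e^{−2τcζ/μ} + 1)^{−1/d} with v∞ > 0. Then (ln v)′ = (k/c)·u on ℝ, i.e., c·v′ = k·u·v. -/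
open Real

theorem stmt14 (τ c μ β k vinf : ℝ)
    (hτ : 0 < τ) (hc : 0 < c) (hμ : 0 < μ) (hβ : 0 < β) (hk : 0 < k)
    (hvinf : 0 < vinf)
    (d : ℝ) (hd : d = 2 * β / μ)
    (u v : ℝ → ℝ)
    (hu : ∀ ζ, u ζ = (2 * τ * c ^ 2 / (k * μ)) * (d + Real.exp (2 * τ * c * ζ / μ))⁻¹)
    (hv : ∀ ζ, v ζ = vinf * (d * Real.exp (-(2 * τ * c * ζ) / μ) + 1) ^ (-(1 / d))) :
    ∀ ζ : ℝ, deriv (fun z => Real.log (v z)) ζ = (k / c) * u ζ ∧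
      c * deriv v ζ = k * u ζ * v ζ := by
  intro ζ
  have hd0 : 0 < d := by rw [hd]; positivity
  set E : ℝ := Real.exp (-(2 * τ * c * ζ) / μ) with hE
  have hE0 : 0 < E := Real.exp_pos _
  set g : ℝ := d * E + 1 with hg
  have hg0 : 0 < g := by positivity
  set X : ℝ := Real.exp (2 * τ * c * ζ / μ) with hX
  have hX0 : 0 < X := Real.exp_pos _
  have hEX : E = X⁻¹ := by
    rw [hE, hX, ← Real.exp_neg, neg_div]
  have h1 : HasDerivAt (fun z : ℝ => -(2 * τ * c * z) / μ) (-(2 * τ * c) / μ) ζ := by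
    simpa using (((hasDerivAt_id ζ).const_mul (2 * τ * c)).neg.div_const μ)
  have h2 : HasDerivAt (fun z : ℝ => Real.exp (-(2 * τ * c * z) / μ))
      (E * (-(2 * τ * c) / μ)) ζ := h1.exp
  have h3 : HasDerivAt (fun z : ℝ => d * Real.exp (-(2 * τ * c * z) / μ) + 1)
      (d * (E * (-(2 * τ * c) / μ))) ζ := (h2.const_mul d).add_const 1
  have h4 := h3.rpow_const (p := -(1 / d)) (Or.inl hg0.ne')
  have h5 := h4.const_mul vinf
  have hveq : v = fun z : ℝ =>
      vinf * (d * Real.exp (-(2 * τ * c * z) / μ) + 1) ^ (-(1 / d)) := funext hv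
  have hvζ : v ζ = vinf * g ^ (-(1 / d)) := hv ζ
  have hP0 : 0 < g ^ (-(1 / d)) := Real.rpow_pos_of_pos hg0 _
  have hvpos : 0 < v ζ := by rw [hvζ]; positivity
  have hdv : deriv v ζ =
      vinf * (d * (E * (-(2 * τ * c) / μ)) * -(1 / d) * g ^ (-(1 / d) - 1)) := by
    rw [hveq]
    simpa [← hE, ← hg] using h5.deriv
  have hlog : deriv (fun z => Real.log (v z)) ζ =
      vinf * (d * (E * (-(2 * τ * c) / μ)) * -(1 / d) * g ^ (-(1 / d) - 1)) /
        (vinf * g ^ (-(1 / d))) := by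
    rw [hveq]
    simpa [← hE, ← hg] using (h5.log (by positivity)).deriv
  have hPsub : g ^ (-(1 / d) - 1) = g ^ (-(1 / d)) / g := by
    rw [Real.rpow_sub hg0, Real.rpow_one]
  constructor
  · rw [hlog, hu ζ, hPsub, hEX]
    rw [hg, hEX]
    field_simp
    ring
  · rw [hdv, hu ζ, hvζ, hPsub, hEX, ← hX]
    rw [hg, hEX]
    field_simp
end

section
/- With u, v as in the previous statement (τ, c, μ, β, k, v∞ > 0, d = 2β/μ > 0), the pair satisfies τc·u′ − β·(u·(ln v)′)′ + (μ/2)·u″ = 0 on ℝ. -/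
open Real

theorem stmt15 (τ c μ β k vinf : ℝ)
    (hτ : 0 < τ) (hc : 0 < c) (hμ : 0 < μ) (hβ : 0 < β) (hk : 0 < k)
    (hvinf : 0 < vinf)
    (d : ℝ) (hd : d = 2 * β / μ)
    (u v : ℝ → ℝ)
    (hu : ∀ ζ, u ζ = (2 * τ * c ^ 2 / (k * μ)) * (d + Real.exp (2 * τ * c * ζ / μ))⁻¹)
    (hv : ∀ ζ, v ζ = vinf * (d * Real.exp (-(2 * τ * c * ζ) / μ) + 1) ^ (-(1 / d))) :
    ∀ ζ : ℝ,
      τ * c * deriv u ζ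
        - β * deriv (fun z => u z * deriv (fun w => Real.log (v w)) z) ζ
        + (μ / 2) * deriv (deriv u) ζ = 0 := by
  intro ζ
  set a : ℝ := 2 * τ * c / μ with ha
  set A : ℝ := 2 * τ * c ^ 2 / (k * μ) with hA
  have hd0 : 0 < d := by rw [hd]; positivity
  have hS : ∀ z : ℝ, 0 < d + Real.exp (a * z) := fun z => by positivity
  have hSne : ∀ z : ℝ, d + Real.exp (a * z) ≠ 0 := fun z => (hS z).ne'
  have hu' : u = fun z => A * (d + Real.exp (a * z))⁻¹ := by
    funext z
    rw [hu z, show 2 * τ * c * z / μ = a * z from by rw [ha]; ring]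
  have hlin : ∀ z : ℝ, HasDerivAt (fun w => a * w) a z := fun z => by
    simpa using (hasDerivAt_id z).const_mul a
  have hexp : ∀ z : ℝ, HasDerivAt (fun w => Real.exp (a * w))
      (Real.exp (a * z) * a) z := fun z =>
    (Real.hasDerivAt_exp (a * z)).comp z (hlin z)
  have hfin : ∀ z : ℝ, HasDerivAt (fun w => (d + Real.exp (a * w))⁻¹)
      (-(Real.exp (a * z) * a) / (d + Real.exp (a * z)) ^ 2) z := fun z =>
    ((hexp z).const_add d).inv (hSne z)
  have hderivu : ∀ z : ℝ, HasDerivAt u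
      (A * (-(Real.exp (a * z) * a) / (d + Real.exp (a * z)) ^ 2)) z := by
    intro z
    rw [hu']
    exact (hfin z).const_mul A
  have hdu : deriv u = fun z =>
      A * (-(Real.exp (a * z) * a) / (d + Real.exp (a * z)) ^ 2) :=
    funext fun z => (hderivu z).deriv
  -- log v
  have hlogv : (fun w => Real.log (v w)) = fun w =>
      Real.log vinf + (-(1 / d)) * Real.log (d * Real.exp (-(a * w)) + 1) := by
    funext w
    rw [hv w, show -(2 * τ * c * w) / μ = -(a * w) from by rw [ha]; ring]
    have hX : 0 < d * Real.exp (-(a * w)) + 1 := by positivity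
    rw [Real.log_mul hvinf.ne' (Real.rpow_pos_of_pos hX _).ne', Real.log_rpow hX]
  have hXpos : ∀ z : ℝ, 0 < d * Real.exp (-(a * z)) + 1 := fun z => by positivity
  have hlinneg : ∀ z : ℝ, HasDerivAt (fun w => -(a * w)) (-a) z := fun z =>
    (hlin z).neg
  have hexpneg : ∀ z : ℝ, HasDerivAt (fun w => d * Real.exp (-(a * w)) + 1)
      (d * (Real.exp (-(a * z)) * -a)) z := fun z =>
    (((hlinneg z).exp.const_mul d).add_const 1)
  have hlogderiv : ∀ z : ℝ, deriv (fun w => Real.log (v w)) z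
      = a * (d + Real.exp (a * z))⁻¹ := by
    intro z
    rw [hlogv]
    have h1 : HasDerivAt (fun w =>
        Real.log vinf + (-(1 / d)) * Real.log (d * Real.exp (-(a * w)) + 1))
        ((-(1 / d)) * ((d * (Real.exp (-(a * z)) * -a)) / (d * Real.exp (-(a * z)) + 1))) z :=
      (((hexpneg z).log (hXpos z).ne').const_mul _).const_add _
    rw [h1.deriv]
    have hX' : d * (Real.exp (a * z))⁻¹ + 1 ≠ 0 := by positivity
    simp only [Real.exp_neg]
    field_simp
  have hmid : (fun z => u z * deriv (fun w => Real.log (v w)) z)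
      = fun z => (A * a) * ((d + Real.exp (a * z))⁻¹) ^ 2 := by
    funext z
    rw [hu', hlogderiv z]
    ring
  have hmidd : HasDerivAt (fun z => (A * a) * ((d + Real.exp (a * z))⁻¹) ^ 2)
      ((A * a) * (2 * ((d + Real.exp (a * ζ))⁻¹) ^ 1 *
        (-(Real.exp (a * ζ) * a) / (d + Real.exp (a * ζ)) ^ 2))) ζ :=
    ((hfin ζ).pow 2).const_mul _
  have hdu2 : deriv u = fun z =>
      (-(A * a)) * (Real.exp (a * z) * ((d + Real.exp (a * z))⁻¹) ^ 2) := by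
    rw [hdu]; funext z; rw [inv_pow]; ring
  have hprod : HasDerivAt
      (fun z => Real.exp (a * z) * ((d + Real.exp (a * z))⁻¹) ^ 2)
      (Real.exp (a * ζ) * a * ((d + Real.exp (a * ζ))⁻¹) ^ 2 +
        Real.exp (a * ζ) * (2 * ((d + Real.exp (a * ζ))⁻¹) ^ 1 *
          (-(Real.exp (a * ζ) * a) / (d + Real.exp (a * ζ)) ^ 2))) ζ :=
    (hexp ζ).mul ((hfin ζ).pow 2)
  have hdd : HasDerivAt (deriv u)
      ((-(A * a)) * (Real.exp (a * ζ) * a * ((d + Real.exp (a * ζ))⁻¹) ^ 2 +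
        Real.exp (a * ζ) * (2 * ((d + Real.exp (a * ζ))⁻¹) ^ 1 *
          (-(Real.exp (a * ζ) * a) / (d + Real.exp (a * ζ)) ^ 2)))) ζ := by
    rw [hdu2]; exact hprod.const_mul _
  rw [hmid, hmidd.deriv, hdd.deriv, (hderivu ζ).deriv]
  have hSζ := hSne ζ
  rw [ha, hA, hd] at *
  have hE := Real.exp_ne_zero (2 * τ * c / μ * ζ)
  field_simp
  ring
end
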